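/- For any Silver tree T, the set of branches [T] meets both E_e-classes of the E₀-class of any of its branches: if a ∈ [T] then there exists b ∈ [T] with a E₀ b and not a E_e b. -/

import Mathlib

/-- Cantor-space equivalence E₀: x E₀ y iff they differ in finitely many coordinates. -/
def E0 (x y : ℕ → Bool) : Prop := {n | x n ≠ y n}.Finite

/-- E_e: the symmetric difference is finite of even cardinality. -/
def Ee (x y : ℕ → Bool) : Prop :=
  {n | x n ≠ y n}.Finite ∧ Even (Nat.card {n | x n ≠ y n})

/-- Full branch-string of a Silver tree scheme `u` along choices `i`. -/
def sFull (u : ℕ → List Bool) : List Bool → List Bool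
  | [] => []
  | i :: rest => (u 0 ++ [i]) ++ sFull (fun n => u (n + 1)) rest

/-- The Silver tree determined by the sequence of strings `u`:
all strings u₀⌢⟨i₀⟩⌢…⌢u_m⌢⟨i_m⟩ together with their initial segments. -/
def silverTree (u : ℕ → List Bool) : Set (List Bool) :=
  {t | ∃ i : List Bool, t <+: sFull u i}

/-- Pointwise mod-2 shift of a finite string `t` by a finite string `s`. -/
def shiftStr (s t : List Bool) : List Bool :=
  List.ofFn (fun k : Fin t.length => xor (t.get k) (s.getD k false))

/-- Pointwise mod-2 shift of a real `a` by a finite string `s`. -/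
def shiftReal (s : List Bool) (a : ℕ → Bool) : ℕ → Bool :=
  fun k => xor (a k) (s.getD k false)

/-- The set of branches of a tree `T ⊆ 2^{<ω}`. -/
def branches (T : Set (List Bool)) : Set (ℕ → Bool) :=
  {x | ∀ k, (List.ofFn fun j : Fin k => x j) ∈ T}

/-! Flipping the bit at position `|u₀|`, the first splitting position of the Silver tree, maps
`[T]` to itself, since on the strings `u₀⌢⟨i₀⟩⌢…` it only switches the choice `i₀`. The flipped
branch differs from the original in exactly one coordinate: an odd, finite number. -/

theorem List.IsPrefix.set {α : Type*} {t l : List α} (h : t <+: l) (n : ℕ) (x : α) :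
    t.set n x <+: l.set n x := by
  obtain ⟨r, rfl⟩ := h
  rw [List.set_append]
  split_ifs with hn
  · exact List.prefix_append _ _
  · rw [List.set_eq_of_length_le (not_lt.mp hn)]
    exact List.prefix_append _ _

theorem List.ofFn_update {α : Type*} (k n : ℕ) (a : ℕ → α) (x : α) :
    List.ofFn (fun j : Fin k => Function.update a n x j) =
      (List.ofFn fun j : Fin k => a j).set n x := by
  apply List.ext_getElem <;> simp [Function.update, List.getElem_set, eq_comm]

theorem sFull_cons_set (u : ℕ → List Bool) (i x : Bool) (rest : List Bool) :
    (sFull u (i :: rest)).set (u 0).length x = sFull u (x :: rest) := by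
  simp [sFull]

theorem set_mem_silverTree {u : ℕ → List Bool} {t : List Bool} (ht : t ∈ silverTree u)
    (x : Bool) : t.set (u 0).length x ∈ silverTree u := by
  obtain ⟨i, hi⟩ := ht
  cases i with
  | nil =>
    obtain rfl : t = [] := List.prefix_nil.mp hi
    exact ⟨[], hi⟩
  | cons i rest =>
    exact ⟨x :: rest, sFull_cons_set u i x rest ▸ hi.set _ x⟩

theorem update_mem_branches_silverTree {u : ℕ → List Bool} {a : ℕ → Bool}
    (ha : a ∈ branches (silverTree u)) (x : Bool) :
    Function.update a (u 0).length x ∈ branches (silverTree u) := fun k => by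
  rw [List.ofFn_update]
  exact set_mem_silverTree (ha k) x

theorem setOf_ne_update_not (a : ℕ → Bool) (p : ℕ) :
    {n | a n ≠ Function.update a p (!a p) n} = {p} := by
  ext n
  by_cases h : n = p <;> simp [h]

theorem E0_update_not (a : ℕ → Bool) (p : ℕ) : E0 a (Function.update a p (!a p)) := by
  rw [E0, setOf_ne_update_not]
  exact Set.finite_singleton p

theorem not_Ee_update_not (a : ℕ → Bool) (p : ℕ) : ¬ Ee a (Function.update a p (!a p)) := by
  rw [Ee, setOf_ne_update_not]
  simp

/-- the branches of a Silver tree meet both E_e-classes of the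
E₀-class of any of its branches. -/
theorem silver_meets_both (u : ℕ → List Bool) (a : ℕ → Bool)
    (ha : a ∈ branches (silverTree u)) :
    ∃ b ∈ branches (silverTree u), E0 a b ∧ ¬ Ee a b :=
  ⟨_, update_mem_branches_silverTree ha _, E0_update_not a _, not_Ee_update_not a _⟩
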